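/- For every ω ∈ ℱ¹(ℙⁿ,e) one has the chain of inclusions of ideals 𝒞(ω) = J(ω) ⊆ I(ω) ⊆ K(ω); that is, the ideal of coefficients of ω equals the singular ideal, the singular ideal is contained in the unfoldings ideal, and the unfoldings ideal is contained in the Kupka ideal. -/

import Mathlib

open MvPolynomial

noncomputable section

abbrev PolyS (n : ℕ) := MvPolynomial (Fin (n+1)) ℂ

/-- The coefficient of `dω` at `dx_i ∧ dx_j`, where `ω` is the 1-form `Σ ω i dx_i`. -/
def dcoeff {n : ℕ} (ω : Fin (n+1) → PolyS n) (i j : Fin (n+1)) : PolyS n :=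
  pderiv i (ω j) - pderiv j (ω i)

/-- Integrability `ω ∧ dω = 0`, written in coordinates. -/
def Integrable {n : ℕ} (ω : Fin (n+1) → PolyS n) : Prop :=
  ∀ i j k, ω i * dcoeff ω j k - ω j * dcoeff ω i k + ω k * dcoeff ω i j = 0

/-- The singular ideal `J(ω)`, generated by the coefficients of `ω`. -/
def Jideal {n : ℕ} (ω : Fin (n+1) → PolyS n) : Ideal (PolyS n) :=
  Ideal.span (Set.range ω)

/-- The ideal `𝒞(dω)` of coefficients of `dω`. -/
def Cdiff {n : ℕ} (ω : Fin (n+1) → PolyS n) : Ideal (PolyS n) :=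
  Ideal.span {g | ∃ i j, g = dcoeff ω i j}

/-- The unfoldings ideal `I(ω) = {h : h·dω = ω ∧ η for some 1-form η}`. -/
def Iideal {n : ℕ} (ω : Fin (n+1) → PolyS n) : Ideal (PolyS n) where
  carrier := {h | ∃ η : Fin (n+1) → PolyS n,
    ∀ i j, h * dcoeff ω i j = ω i * η j - ω j * η i}
  add_mem' := by
    rintro a b ⟨η, hη⟩ ⟨ξ, hξ⟩
    exact ⟨η + ξ, fun i j => by
      simp only [Pi.add_apply]
      linear_combination hη i j + hξ i j⟩
  zero_mem' := ⟨0, fun i j => by simp⟩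
  smul_mem' := by
    rintro c a ⟨η, hη⟩
    exact ⟨c • η, fun i j => by
      simp only [smul_eq_mul, Pi.smul_apply]
      linear_combination c * hη i j⟩

/-- The Kupka ideal `K(ω) = (J(ω) : 𝒞(dω))`. -/
def Kideal {n : ℕ} (ω : Fin (n+1) → PolyS n) : Ideal (PolyS n) :=
  (Jideal ω).colon (Cdiff ω)

/-- The non-Kupka ideal `L(ω) = (J(ω) : K(ω)^∞)`. -/
def Lideal {n : ℕ} (ω : Fin (n+1) → PolyS n) : Ideal (PolyS n) :=
  ⨆ d : ℕ, (Jideal ω).colon (((Kideal ω) ^ (d+1) : Ideal (PolyS n)) : Set (PolyS n))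

/-- The irrelevant ideal `(x_0, …, x_n)`. -/
def irrelevant (n : ℕ) : Ideal (PolyS n) := Ideal.span (Set.range X)

/-- `height I ≥ k` : every prime containing `I` has height at least `k`. -/
def heightGE {n : ℕ} (I : Ideal (PolyS n)) (k : ℕ) : Prop :=
  ∀ p : PrimeSpectrum (PolyS n), I ≤ p.asIdeal → (k : ℕ∞) ≤ Order.height p

/-- `ω ∈ ℱ¹(ℙⁿ, e)` : a foliation one-form of degree `e` on `ℙⁿ`. -/
def IsFoliation (n e : ℕ) (ω : Fin (n+1) → PolyS n) : Prop :=
  ω ≠ 0 ∧ 2 ≤ e ∧ (∀ i, (ω i).IsHomogeneous (e-1)) ∧ Integrable ω ∧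
  (∑ i, X i * ω i = 0) ∧ heightGE (Jideal ω) 2

/-- A homogeneous ideal: stable under taking homogeneous components. -/
def IsHomogIdeal {n : ℕ} (p : Ideal (PolyS n)) : Prop :=
  ∀ h ∈ p, ∀ d : ℕ, homogeneousComponent d h ∈ p

/-- A relevant prime: a homogeneous prime different from the irrelevant ideal. -/
def IsRelevantPrime {n : ℕ} (p : Ideal (PolyS n)) : Prop :=
  p.IsPrime ∧ IsHomogIdeal p ∧ p ≠ irrelevant n

/-- A relevant prime `p` is a division point of `ω` iff `I(ω) ⊄ p`. -/
def DivisionPoint {n : ℕ} (ω : Fin (n+1) → PolyS n) (p : Ideal (PolyS n)) : Prop :=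
  ¬ (Iideal ω ≤ p)

/-- The class `𝒰`. -/
def InU {n : ℕ} (ω : Fin (n+1) → PolyS n) : Prop :=
  ∀ p : Ideal (PolyS n), IsRelevantPrime p → ¬ (Kideal ω ≤ p) → DivisionPoint ω p

/-!
Contracting the integrability identity `ω ∧ dω = 0` with `∂/∂xₖ` gives
`ωₖ · dω = ω ∧ ι_{∂/∂xₖ} dω`, so every coefficient of `ω` lies in the unfoldings ideal.
Conversely, if `h · dω = ω ∧ η`, each coefficient `ωᵢηⱼ - ωⱼηᵢ` of `h · dω` lies in `J(ω)`,
so `h` multiplies `𝒞(dω)` into `J(ω)`.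
-/

section

variable {n : ℕ} {ω : Fin (n+1) → PolyS n}

theorem dcoeff_swap (ω : Fin (n+1) → PolyS n) (i j : Fin (n+1)) :
    dcoeff ω j i = -dcoeff ω i j :=
  (neg_sub _ _).symm

theorem mem_Kideal_iff {h : PolyS n} : h ∈ Kideal ω ↔ ∀ i j, h * dcoeff ω i j ∈ Jideal ω := by
  rw [Kideal, Cdiff, Ideal.colon_span, Submodule.mem_colon]
  exact ⟨fun hK i j => hK _ ⟨i, j, rfl⟩, by rintro hK _ ⟨i, j, rfl⟩; exact hK i j⟩

theorem wedge_mem_Jideal (ω η : Fin (n+1) → PolyS n) (i j : Fin (n+1)) :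
    ω i * η j - ω j * η i ∈ Jideal ω :=
  sub_mem (Ideal.mul_mem_right _ _ (Ideal.subset_span ⟨i, rfl⟩))
    (Ideal.mul_mem_right _ _ (Ideal.subset_span ⟨j, rfl⟩))

theorem Iideal_le_Kideal (ω : Fin (n+1) → PolyS n) : Iideal ω ≤ Kideal ω := by
  rintro h ⟨η, hη⟩
  exact mem_Kideal_iff.2 fun i j => hη i j ▸ wedge_mem_Jideal ω η i j

theorem mem_Iideal_of_integrable (hω : Integrable ω) (k : Fin (n+1)) : ω k ∈ Iideal ω :=
  ⟨dcoeff ω k, fun i j => by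
    rw [dcoeff_swap ω j k, dcoeff_swap ω i k]
    linear_combination hω i j k⟩

theorem Jideal_le_Iideal (hω : Integrable ω) : Jideal ω ≤ Iideal ω :=
  Ideal.span_le.2 <| Set.range_subset_iff.2 (mem_Iideal_of_integrable hω)

end

/-- For every `ω ∈ ℱ¹(ℙⁿ,e)` one has the chain of inclusions
`𝒞(ω) = J(ω) ⊆ I(ω) ⊆ K(ω)`. -/
theorem stmt7 (n e : ℕ) (ω : Fin (n+1) → PolyS n) (hfol : IsFoliation n e ω) :
    Ideal.span (Set.range ω) = Jideal ω ∧ Jideal ω ≤ Iideal ω ∧ Iideal ω ≤ Kideal ω := by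
  obtain ⟨-, -, -, hint, -, -⟩ := hfol
  exact ⟨rfl, Jideal_le_Iideal hint, Iideal_le_Kideal ω⟩

end
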